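/- arXiv:2005.13851 — 2 statements merged into one kernel-verified Lean document; each statement's English description precedes it below -/
import Mathlib

section
/- Let $(I_j)_{j=j_0}^N$ and $(M_j)_{j=j_0}^N$ be nonnegative reals with $\sum_j I_j^2 \le \delta_0^2$, $M_{j_0} \le \delta_0 2^{j_0}$, and $M_j \le M_{j_0} + \sum_{k=j_0}^{j} 2^{k}(I_{k-1}+I_k+I_{k+1})$ for all $j$ (with $I_{j_0-1}=I_{N+1}=0$). Then there is an absolute constant $C>0$ such that $\sum_{j=j_0}^{N} 2^{-2j} M_j^2 \le C \delta_0^2$. -/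
/-!
Write `J k = I (k - 1) + I k + I (k + 1)`, so that `M j ≤ M j0 + ∑_{k ≤ j} 2^k J k` and
`∑ J k ^ 2 ≤ 12 δ0²` by `(a + b + c)² ≤ 3 (a² + b² + c²)`. The initial value contributes
`M j0² ∑_{j ≥ j0} 4^{-j} ≲ δ0²`. The rest is a discrete Hardy inequality: Cauchy–Schwarz
against the weights `2^k` gives `(∑_{k ≤ j} 2^k a k)² ≤ 2^{j+1} ∑_{k ≤ j} 2^k a k²`, and after
interchanging the sums over `k ≤ j` the geometric tail `∑_{j ≥ k} 2^{-j} ≤ 2 ⋅ 2^{-k}` cancels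
the weight `2^k`, leaving `4 ∑ a k²`.
-/

open Finset

lemma sum_Icc_pow_le_of_lt_one {K : Type*} [Field K] [LinearOrder K] [IsStrictOrderedRing K]
    {r : K} (h0 : 0 ≤ r) (h1 : r < 1) (m n : ℕ) :
    ∑ j ∈ Icc m n, r ^ j ≤ r ^ m / (1 - r) := by
  rw [← Ico_add_one_right_eq_Icc]
  exact geom_sum_Ico_le_of_lt_one h0 h1

lemma sum_Icc_two_pow_le (m n : ℕ) : ∑ k ∈ Icc m n, (2 : ℝ) ^ k ≤ 2 ^ (n + 1) := by
  calc ∑ k ∈ Icc m n, (2 : ℝ) ^ k ≤ ∑ k ∈ range (n + 1), (2 : ℝ) ^ k :=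
        sum_le_sum_of_subset_of_nonneg (fun k hk => by simp only [mem_Icc, mem_range] at hk ⊢; omega)
          (fun _ _ _ => by positivity)
    _ ≤ 2 ^ (n + 1) := by rw [geom_sum_eq (by norm_num)]; linarith

lemma sq_sum_two_pow_mul_le (a : ℕ → ℝ) (m n : ℕ) :
    (∑ k ∈ Icc m n, 2 ^ k * a k) ^ 2 ≤ 2 ^ (n + 1) * ∑ k ∈ Icc m n, 2 ^ k * a k ^ 2 := by
  calc (∑ k ∈ Icc m n, 2 ^ k * a k) ^ 2
        ≤ (∑ k ∈ Icc m n, (2 : ℝ) ^ k) * ∑ k ∈ Icc m n, 2 ^ k * a k ^ 2 :=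
        sum_sq_le_sum_mul_sum_of_sq_le_mul _ (fun _ _ => by positivity)
          (fun _ _ => by positivity) (fun _ _ => le_of_eq (by ring))
    _ ≤ 2 ^ (n + 1) * ∑ k ∈ Icc m n, 2 ^ k * a k ^ 2 := by
        gcongr
        exact sum_Icc_two_pow_le m n

theorem sum_inv_four_pow_mul_sq_sum_two_pow_mul_le (a : ℕ → ℝ) (m n : ℕ) :
    ∑ j ∈ Icc m n, ((2 : ℝ) ^ (2 * j))⁻¹ * (∑ k ∈ Icc m j, 2 ^ k * a k) ^ 2
      ≤ 4 * ∑ k ∈ Icc m n, a k ^ 2 := by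
  calc ∑ j ∈ Icc m n, ((2 : ℝ) ^ (2 * j))⁻¹ * (∑ k ∈ Icc m j, 2 ^ k * a k) ^ 2
        ≤ ∑ j ∈ Icc m n, ∑ k ∈ Icc m j, 2 * 2⁻¹ ^ j * (2 ^ k * a k ^ 2) := by
        gcongr with j
        rw [← mul_sum]
        calc ((2 : ℝ) ^ (2 * j))⁻¹ * (∑ k ∈ Icc m j, 2 ^ k * a k) ^ 2
            ≤ ((2 : ℝ) ^ (2 * j))⁻¹ * (2 ^ (j + 1) * ∑ k ∈ Icc m j, 2 ^ k * a k ^ 2) := by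
              gcongr; exact sq_sum_two_pow_mul_le a m j
          _ = 2 * 2⁻¹ ^ j * ∑ k ∈ Icc m j, 2 ^ k * a k ^ 2 := by
              rw [inv_pow, pow_mul', pow_succ]; field_simp; ring
    _ = ∑ k ∈ Icc m n, 2 ^ k * a k ^ 2 * (2 * ∑ j ∈ Icc k n, (2 : ℝ)⁻¹ ^ j) := by
        rw [sum_comm' (t' := Icc m n) (s' := fun k => Icc k n)
          (fun j k => by simp only [mem_Icc]; omega)]
        refine sum_congr rfl fun k _ => ?_
        rw [mul_sum, mul_sum]
        exact sum_congr rfl fun j _ => by ring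
    _ ≤ ∑ k ∈ Icc m n, 2 ^ k * a k ^ 2 * (2 * (2⁻¹ ^ k / (1 - 2⁻¹))) := by
        gcongr with k
        exact sum_Icc_pow_le_of_lt_one (by norm_num) (by norm_num) k n
    _ = 4 * ∑ k ∈ Icc m n, a k ^ 2 := by
        rw [mul_sum]
        refine sum_congr rfl fun k _ => ?_
        rw [inv_pow]; field_simp; ring

lemma sum_range_eq_sum_Icc_of_eq_zero {M : Type*} [AddCommMonoid M] {f : ℕ → M} {m N n : ℕ}
    (hf : ∀ j, j < m ∨ N < j → f j = 0) (hn : N < n) :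
    ∑ j ∈ range n, f j = ∑ j ∈ Icc m N, f j :=
  (sum_subset (fun j hj => by simp only [mem_Icc, mem_range] at hj ⊢; omega)
    (fun j _ hj => hf j (by simp only [mem_Icc] at hj; omega))).symm

lemma sum_range_sq_neighbours_le (I : ℕ → ℝ) (n : ℕ) :
    ∑ k ∈ range n, (I (k - 1) + I k + I (k + 1)) ^ 2 ≤ 12 * ∑ k ∈ range (n + 1), I k ^ 2 := by
  set S := ∑ k ∈ range (n + 1), I k ^ 2 with hS
  have hmono : ∀ m ≤ n + 1, ∑ k ∈ range m, I k ^ 2 ≤ S := fun m hm =>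
    sum_le_sum_of_subset_of_nonneg (range_mono hm) fun _ _ _ => sq_nonneg _
  have hsucc : ∑ k ∈ range n, I (k + 1) ^ 2 ≤ S := by
    rw [hS, sum_range_succ']; linarith [sq_nonneg (I 0)]
  have hpred : ∑ k ∈ range n, I (k - 1) ^ 2 ≤ 2 * S := by
    cases n with
    | zero => simpa [S] using sq_nonneg (I 0)
    | succ n =>
      -- `k - 1` truncates at `0`, so `I 0` is counted twice
      have hI0 : I 0 ^ 2 ≤ S := by simpa using hmono 1 (by omega)
      rw [sum_range_succ']
      simp only [add_tsub_cancel_right, zero_tsub]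
      linarith [hmono n (by omega)]
  calc ∑ k ∈ range n, (I (k - 1) + I k + I (k + 1)) ^ 2
      ≤ ∑ k ∈ range n, 3 * (I (k - 1) ^ 2 + I k ^ 2 + I (k + 1) ^ 2) :=
        sum_le_sum fun k _ => by
          nlinarith [sq_nonneg (I (k - 1) - I k), sq_nonneg (I k - I (k + 1)),
            sq_nonneg (I (k - 1) - I (k + 1))]
    _ = 3 * (∑ k ∈ range n, I (k - 1) ^ 2 + ∑ k ∈ range n, I k ^ 2
          + ∑ k ∈ range n, I (k + 1) ^ 2) := by
        rw [← sum_add_distrib, ← sum_add_distrib, mul_sum]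
    _ ≤ 12 * S := by linarith [hmono n (by omega)]

lemma sum_Icc_sq_neighbours_le {I : ℕ → ℝ} {m N : ℕ} (hI : ∀ j, j < m ∨ N < j → I j = 0) :
    ∑ k ∈ Icc m N, (I (k - 1) + I k + I (k + 1)) ^ 2 ≤ 12 * ∑ k ∈ Icc m N, I k ^ 2 :=
  calc ∑ k ∈ Icc m N, (I (k - 1) + I k + I (k + 1)) ^ 2
      ≤ ∑ k ∈ range (N + 1), (I (k - 1) + I k + I (k + 1)) ^ 2 :=
        sum_le_sum_of_subset_of_nonneg
          (fun k hk => by simp only [mem_Icc, mem_range] at hk ⊢; omega)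
          (fun _ _ _ => sq_nonneg _)
    _ ≤ 12 * ∑ k ∈ range (N + 2), I k ^ 2 := sum_range_sq_neighbours_le I (N + 1)
    _ = 12 * ∑ k ∈ Icc m N, I k ^ 2 := by
        rw [sum_range_eq_sum_Icc_of_eq_zero (fun j hj => by rw [hI j hj]; norm_num) (by omega)]

/-- Discrete core of part (c) of the Small Norm on Expanding Annuli lemma. -/
theorem stmt_1 :
    ∃ C : ℝ, 0 < C ∧
      ∀ (j0 N : ℕ) (δ0 : ℝ) (I M : ℕ → ℝ),
        j0 ≤ N →
        (∀ j, 0 ≤ I j) → (∀ j, 0 ≤ M j) → 0 ≤ δ0 →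
        (∀ j, j < j0 ∨ N < j → I j = 0) →
        (∑ j ∈ Finset.Icc j0 N, (I j) ^ 2) ≤ δ0 ^ 2 →
        M j0 ≤ δ0 * 2 ^ j0 →
        (∀ j, j0 ≤ j → j ≤ N →
          M j ≤ M j0 + ∑ k ∈ Finset.Icc j0 j, 2 ^ k * (I (k - 1) + I k + I (k + 1))) →
        (∑ j ∈ Finset.Icc j0 N, ((2 : ℝ) ^ (2 * j))⁻¹ * (M j) ^ 2) ≤ C * δ0 ^ 2 := by
  refine ⟨100, by norm_num, ?_⟩
  intro j0 N δ0 I M _ _ hM _ hIsupp hIsum hMj0 hMrec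
  set J : ℕ → ℝ := fun k => I (k - 1) + I k + I (k + 1)
  set S : ℕ → ℝ := fun j => ∑ k ∈ Icc j0 j, 2 ^ k * J k
  have hJ : ∑ k ∈ Icc j0 N, J k ^ 2 ≤ 12 * δ0 ^ 2 :=
    (sum_Icc_sq_neighbours_le hIsupp).trans (by linarith)
  have hM0 : M j0 ^ 2 ≤ δ0 ^ 2 * 4 ^ j0 :=
    calc M j0 ^ 2 ≤ (δ0 * 2 ^ j0) ^ 2 := pow_le_pow_left₀ (hM j0) hMj0 2
      _ = δ0 ^ 2 * 4 ^ j0 := by rw [mul_pow, ← pow_mul, pow_mul']; norm_num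
  have hMsq : ∀ j ∈ Icc j0 N, M j ^ 2 ≤ 2 * (M j0 ^ 2 + S j ^ 2) := fun j hj =>
    (pow_le_pow_left₀ (hM j) (hMrec j (mem_Icc.1 hj).1 (mem_Icc.1 hj).2) 2).trans add_sq_le
  calc ∑ j ∈ Icc j0 N, ((2 : ℝ) ^ (2 * j))⁻¹ * M j ^ 2
      ≤ ∑ j ∈ Icc j0 N, ((2 : ℝ) ^ (2 * j))⁻¹ * (2 * (M j0 ^ 2 + S j ^ 2)) := by
        gcongr with j hj; exact hMsq j hj
    _ = 2 * M j0 ^ 2 * ∑ j ∈ Icc j0 N, (4 : ℝ)⁻¹ ^ j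
          + 2 * ∑ j ∈ Icc j0 N, ((2 : ℝ) ^ (2 * j))⁻¹ * S j ^ 2 := by
        rw [mul_sum, mul_sum, ← sum_add_distrib]
        refine sum_congr rfl fun j _ => ?_
        rw [pow_mul, inv_pow]; norm_num; ring
    _ ≤ 2 * (δ0 ^ 2 * 4 ^ j0) * ((4 : ℝ)⁻¹ ^ j0 / (1 - 4⁻¹)) + 2 * (4 * (12 * δ0 ^ 2)) := by
        gcongr
        · exact sum_Icc_pow_le_of_lt_one (by norm_num) (by norm_num) j0 N
        · exact (sum_inv_four_pow_mul_sq_sum_two_pow_mul_le J j0 N).trans (by linarith)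
    _ ≤ 100 * δ0 ^ 2 := by
        rw [inv_pow]; field_simp; nlinarith [sq_nonneg δ0]
end

section
/- Let $g(x,y) = a e^{(x+iy)/s} + b e^{-(x+iy)/s}$ on the cylinder $C = (-L,L) \times (\mathbb{R}/2\pi s\mathbb{Z})$ with $a,b \in \mathbb{C}$. Then $\left| \langle \mathrm{Im}(a e^{(x+iy)/s}), \mathrm{Im}(b e^{-(x+iy)/s}) \rangle_{L^2(C)} \right| \le \frac{2L}{s\,\sinh(2L/s)} \, \|\mathrm{Im}(a e^{(x+iy)/s})\|_{L^2(C)} \cdot \|\mathrm{Im}(b e^{-(x+iy)/s})\|_{L^2(C)}$, and in particular the correlation tends to $0$ as $L/s \to \infty$. -/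
/-!
Both modes separate in `x` and `y`: `Im(a e^{(x+iy)/s}) = e^{x/s} Im(a e^{iy/s})` and
`Im(b e^{-(x+iy)/s}) = e^{-x/s} Im(conj(-b) e^{iy/s})`. Over a period,
`∫ Im(c e^{iθ}) Im(c' e^{iθ}) dθ = π Re(c conj c')`, so all three integrals factor. In the
cross term the radial weights cancel and contribute `2L`, whereas in each squared norm the
weight is `e^{±2x/s}`, contributing `s sinh(2L/s)`; the angular parts give `-πs Re(ab)`,
`πs|a|²`, `πs|b|²`, and `|Re(ab)| ≤ |a||b|` finishes.
-/

open MeasureTheory Real ComplexConjugate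

lemma setIntegral_Ioo_prod_Ioo_mul_mul {a b c d : ℝ} (hab : a ≤ b) (hcd : c ≤ d)
    (f₁ f₂ g₁ g₂ : ℝ → ℝ) :
    ∫ p in Set.Ioo a b ×ˢ Set.Ioo c d, f₁ p.1 * g₁ p.2 * (f₂ p.1 * g₂ p.2) =
      (∫ x in a..b, f₁ x * f₂ x) * ∫ y in c..d, g₁ y * g₂ y := by
  rw [intervalIntegral.integral_of_le hab, intervalIntegral.integral_of_le hcd,
    integral_Ioc_eq_integral_Ioo, integral_Ioc_eq_integral_Ioo, Measure.volume_eq_prod,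
    ← setIntegral_prod_mul]
  congr 1 with p
  ring

lemma integral_exp_div_mul_exp_div (L s : ℝ) (hs : s ≠ 0) :
    ∫ x in -L..L, rexp (x / s) * rexp (x / s) = s * sinh (2 * L / s) := by
  have h : ∀ x, rexp (x / s) * rexp (x / s) = rexp (2 / s * x) := fun x => by
    rw [← Real.exp_add]; ring_nf
  simp_rw [h]
  rw [intervalIntegral.integral_comp_mul_left rexp (by simpa using hs), integral_exp, sinh_eq]
  field_simp
  ring_nf

lemma integral_exp_neg_div_mul_exp_neg_div (L s : ℝ) (hs : s ≠ 0) :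
    ∫ x in -L..L, rexp (-x / s) * rexp (-x / s) = s * sinh (2 * L / s) := by
  rw [intervalIntegral.integral_comp_neg (fun x => rexp (x / s) * rexp (x / s)), neg_neg,
    integral_exp_div_mul_exp_div L s hs]

lemma integral_exp_div_mul_exp_neg_div (L s : ℝ) :
    ∫ x in -L..L, rexp (x / s) * rexp (-x / s) = 2 * L := by
  simp_rw [← Real.exp_add, neg_div, add_neg_cancel, Real.exp_zero]
  simp only [intervalIntegral.integral_const, smul_eq_mul, mul_one]
  ring

lemma im_mul_exp_ofReal_mul_I (z : ℂ) (θ : ℝ) :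
    (z * Complex.exp (θ * Complex.I)).im = z.re * sin θ + z.im * cos θ := by
  rw [Complex.mul_im, Complex.exp_ofReal_mul_I_re, Complex.exp_ofReal_mul_I_im]

lemma integral_im_mul_exp_mul_im_mul_exp (a c : ℂ) :
    ∫ θ in (0 : ℝ)..2 * π,
      (a * Complex.exp (θ * Complex.I)).im * (c * Complex.exp (θ * Complex.I)).im =
      π * (a * conj c).re := by
  have hexpand : ∀ θ : ℝ,
      (a * Complex.exp (θ * Complex.I)).im * (c * Complex.exp (θ * Complex.I)).im =
        a.re * c.re * sin θ ^ 2 + (a.re * c.im + a.im * c.re) * (sin θ * cos θ) +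
          a.im * c.im * cos θ ^ 2 := fun θ => by
    rw [im_mul_exp_ofReal_mul_I, im_mul_exp_ofReal_mul_I]; ring
  have hi₁ : IntervalIntegrable (fun θ => a.re * c.re * sin θ ^ 2) volume 0 (2 * π) :=
    (by fun_prop : Continuous _).intervalIntegrable _ _
  have hi₂ : IntervalIntegrable (fun θ => (a.re * c.im + a.im * c.re) * (sin θ * cos θ))
      volume 0 (2 * π) :=
    (by fun_prop : Continuous _).intervalIntegrable _ _
  have hi₃ : IntervalIntegrable (fun θ => a.im * c.im * cos θ ^ 2) volume 0 (2 * π) :=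
    (by fun_prop : Continuous _).intervalIntegrable _ _
  simp_rw [hexpand]
  rw [intervalIntegral.integral_add (hi₁.add hi₂) hi₃, intervalIntegral.integral_add hi₁ hi₂,
    intervalIntegral.integral_const_mul, intervalIntegral.integral_const_mul,
    intervalIntegral.integral_const_mul, integral_sin_sq, integral_cos_sq, integral_sin_mul_cos₁]
  simp only [sin_two_pi, cos_two_pi, sin_zero, cos_zero, Complex.mul_re, Complex.conj_re,
    Complex.conj_im]
  ring

lemma integral_im_mul_exp_div_mul_im_mul_exp_div (a c : ℂ) {s : ℝ} (hs : s ≠ 0) :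
    ∫ y in (0 : ℝ)..2 * π * s,
      (a * Complex.exp ((y / s : ℝ) * Complex.I)).im *
        (c * Complex.exp ((y / s : ℝ) * Complex.I)).im =
      s * π * (a * conj c).re := by
  rw [intervalIntegral.integral_comp_div
      (fun θ => (a * Complex.exp (θ * Complex.I)).im * (c * Complex.exp (θ * Complex.I)).im) hs,
    zero_div, mul_div_cancel_right₀ _ hs, integral_im_mul_exp_mul_im_mul_exp, smul_eq_mul, mul_assoc]

lemma im_mul_exp_div (c : ℂ) (x y s : ℝ) :
    (c * Complex.exp ((x + Complex.I * y) / s)).im =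
      rexp (x / s) * (c * Complex.exp ((y / s : ℝ) * Complex.I)).im := by
  have h : ((x : ℂ) + Complex.I * y) / s = (x / s : ℝ) + (y / s : ℝ) * Complex.I := by
    push_cast; ring
  rw [h, Complex.exp_add, ← Complex.ofReal_exp, mul_left_comm, Complex.im_ofReal_mul]

lemma im_mul_exp_neg_div (c : ℂ) (x y s : ℝ) :
    (c * Complex.exp (-((x + Complex.I * y) / s))).im =
      rexp (-x / s) * (conj (-c) * Complex.exp ((y / s : ℝ) * Complex.I)).im := by
  have h : c * Complex.exp (-((x + Complex.I * y) / s)) =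
      -conj (conj (-c) * Complex.exp (((-x : ℝ) + Complex.I * y) / s)) := by
    rw [map_mul, Complex.conj_conj, ← Complex.exp_conj]
    simp only [map_div₀, map_add, map_mul, Complex.conj_ofReal, Complex.conj_I]
    push_cast
    ring_nf
  rw [h, Complex.neg_im, Complex.conj_im, neg_neg, im_mul_exp_div]

/-- Near-orthogonality of the imaginary parts of the modes `z` and `z⁻¹` on a
long flat cylinder: the correlation is at most `2L/(s·sinh(2L/s))`, which tends
to `0` as `L/s → ∞`. -/
theorem stmt_9 (s L : ℝ) (hs : 0 < s) (hL : 0 < L)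
    (D : Set (ℝ × ℝ)) (hD : D = Set.Ioo (-L) L ×ˢ Set.Ioo 0 (2 * π * s))
    (a b : ℂ)
    (u v : ℝ × ℝ → ℝ)
    (hu : ∀ p, u p = (a * Complex.exp (((p.1 : ℂ) + Complex.I * (p.2 : ℂ)) / (s : ℂ))).im)
    (hv : ∀ p, v p = (b * Complex.exp (-(((p.1 : ℂ) + Complex.I * (p.2 : ℂ)) / (s : ℂ)))).im) :
    |∫ p in D, u p * v p ∂volume| ≤
      (2 * L / (s * Real.sinh (2 * L / s))) *
        (Real.sqrt (∫ p in D, (u p) ^ 2 ∂volume) *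
          Real.sqrt (∫ p in D, (v p) ^ 2 ∂volume)) := by
  set A : ℝ → ℝ := fun y => (a * Complex.exp ((y / s : ℝ) * Complex.I)).im
  set B : ℝ → ℝ := fun y => (conj (-b) * Complex.exp ((y / s : ℝ) * Complex.I)).im
  have hu' : ∀ p, u p = rexp (p.1 / s) * A p.2 := fun p => by rw [hu, im_mul_exp_div]
  have hv' : ∀ p, v p = rexp (-p.1 / s) * B p.2 := fun p => by rw [hv, im_mul_exp_neg_div]
  have hcyl := setIntegral_Ioo_prod_Ioo_mul_mul (by linarith : -L ≤ L)
    (by positivity : 0 ≤ 2 * π * s)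
  have hAB : ∫ y in (0 : ℝ)..2 * π * s, A y * B y = s * π * (a * -b).re := by
    rw [integral_im_mul_exp_div_mul_im_mul_exp_div _ _ hs.ne', Complex.conj_conj]
  have hAA : ∫ y in (0 : ℝ)..2 * π * s, A y * A y = s * π * ‖a‖ ^ 2 := by
    rw [integral_im_mul_exp_div_mul_im_mul_exp_div _ _ hs.ne', Complex.mul_conj',
      ← Complex.ofReal_pow, Complex.ofReal_re]
  have hBB : ∫ y in (0 : ℝ)..2 * π * s, B y * B y = s * π * ‖b‖ ^ 2 := by
    rw [integral_im_mul_exp_div_mul_im_mul_exp_div _ _ hs.ne', Complex.mul_conj',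
      ← Complex.ofReal_pow, Complex.ofReal_re, Complex.norm_conj, norm_neg]
  simp only [hD, sq, hu', hv']
  rw [hcyl (fun x => rexp (x / s)) (fun x => rexp (-x / s)) A B,
    hcyl (fun x => rexp (x / s)) (fun x => rexp (x / s)) A A,
    hcyl (fun x => rexp (-x / s)) (fun x => rexp (-x / s)) B B, integral_exp_div_mul_exp_neg_div, integral_exp_div_mul_exp_div L s hs.ne',
    integral_exp_neg_div_mul_exp_neg_div L s hs.ne', hAB, hAA, hBB]
  have hK : 0 < s * sinh (2 * L / s) := mul_pos hs (sinh_pos_iff.mpr (by positivity))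
  calc |2 * L * (s * π * (a * -b).re)| = 2 * L * (s * π) * |(a * -b).re| := by
        rw [← mul_assoc, abs_mul, abs_of_pos (by positivity)]
    _ ≤ 2 * L * (s * π) * (‖a‖ * ‖b‖) := by
        gcongr; simpa using Complex.abs_re_le_norm (a * -b)
    _ = _ := by
        rw [← Real.sqrt_mul (by positivity),
          show s * sinh (2 * L / s) * (s * π * ‖a‖ ^ 2) * (s * sinh (2 * L / s) * (s * π * ‖b‖ ^ 2))
            = (s * sinh (2 * L / s) * (s * π) * (‖a‖ * ‖b‖)) ^ 2 by ring,
          Real.sqrt_sq (by positivity)]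
        field_simp
end
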